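/- arXiv:2502.01227 — 2 statements merged into one kernel-verified Lean document; each statement's English description precedes it below -/
import Mathlib

section
/- In any execution of a protocol containing an agent trap, once an inner state of the trap becomes occupied it remains occupied indefinitely: every transition from a configuration in which an inner state i ∈ {1,...,m} of the trap is occupied by at least one agent yields a configuration in which state i is still occupied by at least one agent. -/
open Classical Finset

/-- An ordered pair of distinct agents (initiator, responder) chosen by the scheduler. -/
abbrev SchedPair (n : ℕ) : Type := {p : Fin n × Fin n // p.1 ≠ p.2}

/-- One interaction step: the scheduler selects the ordered pair `p` of distinct agents
(initiator `p.1.1`, responder `p.1.2`) and they update their states via the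
transition function `δ`. -/
def pstep {S : Type} {n : ℕ} (δ : S → S → S × S) (c : Fin n → S) (p : SchedPair n) :
    Fin n → S := fun a =>
  if a = p.1.1 then (δ (c p.1.1) (c p.1.2)).1
  else if a = p.1.2 then (δ (c p.1.1) (c p.1.2)).2
  else c a

/-- The configuration after the first `t` interactions of the finite schedule `σ`. -/
def configAt {S : Type} {n T : ℕ} (δ : S → S → S × S) (c0 : Fin n → S)
    (σ : Fin T → SchedPair n) (t : ℕ) : Fin n → S :=
  ((List.ofFn σ).take t).foldl (pstep δ) c0

/-- Probability of the event `E` under the uniform random scheduler running for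
`T` interactions (interactions are drawn independently and uniformly at random). -/
noncomputable def schedPr {n : ℕ} (T : ℕ) (E : (Fin T → SchedPair n) → Prop) : ℝ :=
  (((Finset.univ : Finset (Fin T → SchedPair n)).filter fun σ => E σ).card : ℝ) /
    ((Finset.univ : Finset (Fin T → SchedPair n)).card : ℝ)

/-- The infinite trajectory generated by the schedule `σ` from configuration `c0`. -/
def ptraj {S : Type} {n : ℕ} (δ : S → S → S × S) (c0 : Fin n → S)
    (σ : ℕ → SchedPair n) : ℕ → Fin n → S
  | 0 => c0
  | t + 1 => pstep δ (ptraj δ c0 σ t) (σ t)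

section Step

variable {S : Type} {n : ℕ} (δ : S → S → S × S) (c : Fin n → S) (p : SchedPair n)

theorem pstep_apply_initiator : pstep δ c p p.1.1 = (δ (c p.1.1) (c p.1.2)).1 := by
  simp [pstep]

theorem pstep_apply_of_ne {a : Fin n} (h₁ : a ≠ p.1.1) (h₂ : a ≠ p.1.2) :
    pstep δ c p a = c a := by
  simp [pstep, h₁, h₂]

theorem pstep_eq_self_of_null (h : δ (c p.1.1) (c p.1.2) = (c p.1.1, c p.1.2)) :
    pstep δ c p = c := by
  funext a
  unfold pstep
  split_ifs with h₁ h₂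
  · rw [h, h₁]
  · rw [h, h₂]
  · rfl

theorem exists_pstep_apply_eq_of_inert {s : S} (hself : (δ s s).1 = s)
    (hinert : ∀ t ≠ s, δ s t = (s, t) ∧ δ t s = (t, s)) (hocc : ∃ a, c a = s) :
    ∃ a, pstep δ c p a = s := by
  obtain ⟨a, ha⟩ := hocc
  by_cases hboth : c p.1.1 = s ∧ c p.1.2 = s
  · exact ⟨p.1.1, by rw [pstep_apply_initiator, hboth.1, hboth.2, hself]⟩
  by_cases hpart : a = p.1.1 ∨ a = p.1.2
  · have hnull : δ (c p.1.1) (c p.1.2) = (c p.1.1, c p.1.2) := by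
      rcases hpart with rfl | rfl
      · rw [ha]; exact (hinert _ fun h ↦ hboth ⟨ha, h⟩).1
      · rw [ha]; exact (hinert _ fun h ↦ hboth ⟨h, ha⟩).2
    exact ⟨a, by rw [pstep_eq_self_of_null δ c p hnull, ha]⟩
  · obtain ⟨h₁, h₂⟩ := not_or.mp hpart
    exact ⟨a, by rw [pstep_apply_of_ne δ c p h₁ h₂, ha]⟩

end Step

theorem trap_inner_state_stays_occupied_general
    {S : Type} {m N : ℕ} (trap : Fin (m + 1) ↪ S) (δ : S → S → S × S)
    (hinner : ∀ i : Fin (m + 1), i ≠ 0 → δ (trap i) (trap i) = (trap i, trap (i - 1)))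
    (honly : ∀ s t : S, s ≠ t → ((∃ i, s = trap i) ∨ (∃ i, t = trap i)) → δ s t = (s, t))
    (c : Fin N → S) (p : SchedPair N) (i : Fin (m + 1)) (hi : i ≠ 0)
    (hocc : ∃ a, c a = trap i) :
    ∃ a, pstep δ c p a = trap i := by
  refine exists_pstep_apply_eq_of_inert δ c p (by rw [hinner i hi]) (fun t ht ↦ ?_) hocc
  exact ⟨honly _ _ ht.symm (Or.inl ⟨i, rfl⟩), honly _ _ ht (Or.inr ⟨i, rfl⟩)⟩

/-- In any execution of a protocol containing an agent trap
(gate state `trap 0`, inner states `trap i` for `i ≠ 0`, rules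
`Rᵢ : i+i → i+(i-1)` and `R_g : 0+0 → m+Y`, and no other rules whose left-hand
sides involve the trap's states), once an inner state of the trap is occupied it
remains occupied: every single transition from a configuration in which the inner
state `trap i` is occupied yields a configuration in which it is still occupied. -/
theorem trap_inner_state_stays_occupied
    {S : Type} {m N : ℕ} (trap : Fin (m + 1) ↪ S) (Y : S) (δ : S → S → S × S)
    (hY : ∀ i, Y ≠ trap i)
    (hinner : ∀ i : Fin (m + 1), i ≠ 0 → δ (trap i) (trap i) = (trap i, trap (i - 1)))
    (hgate : δ (trap 0) (trap 0) = (trap (Fin.last m), Y))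
    (honly : ∀ s t : S, s ≠ t → ((∃ i, s = trap i) ∨ (∃ i, t = trap i)) → δ s t = (s, t))
    (c : Fin N → S) (p : SchedPair N) (i : Fin (m + 1)) (hi : i ≠ 0)
    (hocc : ∃ a, c a = trap i) :
    ∃ a, pstep δ c p a = trap i :=
  trap_inner_state_stays_occupied_general trap δ hinner honly c p i hi hocc
end

section
/- Consider an arbitrary root-to-leaf path of the tree of ranks under the ranking protocol based on rule R₁ with the uniform random scheduler on n agents. If the path is balanced, then with high probability within parallel time O(n·log n) the protocol stabilises evenly on the path (each node of the path occupied by exactly one agent); if the path is overloaded, then with high probability within parallel time O(n·log n) the leaf of the path becomes overloaded (occupied by at least two agents). -/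
open Classical Finset

/-- `subSize k j` is the size of the subtree rooted at the node with pre-order index
`j` in the perfectly balanced binary tree of size `k` (0 if `j` is out of range).
For odd `k = 2l+1` the root is branching, with two identical subtrees of size `l`
(pre-order offsets `1..l` and `l+1..2l`); for even `k` the root is non-branching,
with a single child rooting a tree of size `k-1`. -/
def subSize : ℕ → ℕ → ℕ
  | 0, _ => 0
  | k + 1, 0 => k + 1
  | k + 1, j + 1 =>
    if (k + 1) % 2 = 1 then
      if j < (k + 1) / 2 then subSize ((k + 1) / 2) j
      else subSize ((k + 1) / 2) (j - (k + 1) / 2)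
    else subSize k j
  termination_by k j => k
  decreasing_by all_goals omega

/-- Rule `R₁` of the tree-of-ranks protocol on the `n` rank states `0,…,n-1`
(identified with the nodes of the perfectly balanced binary tree of size `n` in
pre-order): `p + p → p + (p+1)` when `p` is a non-branching node, and
`p + p → (p+1) + (p+l+1)` when `p` is a branching node with child subtrees of
size `l`; no other pair of states interacts. -/
def treeDelta (n : ℕ) : ℕ → ℕ → ℕ × ℕ := fun p q =>
  if p = q then
    if subSize n p % 2 = 0 ∧ subSize n p ≠ 0 then (p, p + 1)
    else if 1 < subSize n p then (p + 1, p + subSize n p / 2 + 1)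
    else (p, q)
  else (p, q)

/-- A schedule is fair if every ordered pair of distinct agents is selected
infinitely often. -/
def Fair {n : ℕ} (σ : ℕ → SchedPair n) : Prop :=
  ∀ p : SchedPair n, ∀ t, ∃ t', t ≤ t' ∧ σ t' = p

/-- `q` is a child of `p` in the tree of ranks of size `n`. -/
def IsChild (n p q : ℕ) : Prop :=
  (subSize n p % 2 = 0 ∧ subSize n p ≠ 0 ∧ q = p + 1) ∨
  (subSize n p % 2 = 1 ∧ 1 < subSize n p ∧ (q = p + 1 ∨ q = p + subSize n p / 2 + 1))

/-- `P` is a root-to-leaf path of the tree of ranks of size `n`, ending at the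
leaf `lf`. -/
def RootToLeaf (n : ℕ) (P : List ℕ) (lf : ℕ) : Prop :=
  P.head? = some 0 ∧ List.Chain' (IsChild n) P ∧ P.getLast? = some lf ∧ subSize n lf = 1

/-- The path `P` is balanced for the initial configuration `c0`: the protocol based
on rule `R₁` stabilises silently with every node of the path occupied by exactly
one agent (under every fair schedule). -/
def BalancedPath (n : ℕ) (c0 : Fin n → ℕ) (P : List ℕ) : Prop :=
  ∀ σ : ℕ → SchedPair n, Fair σ →
    ∃ T, ∀ t, T ≤ t → ∀ p ∈ P, ∃! a, ptraj (treeDelta n) c0 σ t a = p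

/-- The path ending in the leaf `lf` is overloaded for the initial configuration
`c0`: the protocol based on rule `R₁` leads (under every fair schedule) to a
configuration in which the leaf `lf` becomes occupied by at least two agents. -/
def OverloadedPath (n : ℕ) (c0 : Fin n → ℕ) (lf : ℕ) : Prop :=
  ∀ σ : ℕ → SchedPair n, Fair σ →
    ∃ t, ∃ a b : Fin n, a ≠ b ∧
      ptraj (treeDelta n) c0 σ t a = lf ∧ ptraj (treeDelta n) c0 σ t b = lf

/-! Weight a rank state whose subtree has size `s ≥ 2` by `9 ^ ⌊log₂ s⌋`, tripled when `s` is
even, so that every child of a node weighs at most a third of it and all weights are `≤ 3 n⁴`.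
The potential `Φ = ∑ᵥ w(v) · (#agents in v - 1)` vanishes only at silent configurations. A
productive interaction at `v` lowers `3Φ` by at least `w(v)`, and the productive ordered pairs carry
total weight at least `Φ`; so one uniformly random interaction out of the `N ≤ n²` ordered pairs
multiplies `E[Φ]` by at most `1 - 1/(3N)`. After `T ≥ 24 n² log n` interactions
`E[Φ] ≤ 3 n⁵ · n⁻⁸`, and by Markov's inequality the configuration is silent with probability
at least `1 - 1/n`. A silent configuration reached by a finite schedule is the final configuration
of every fair continuation of that schedule, to which the hypotheses on balanced and overloaded
paths apply. -/

section Schedules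

variable {S : Type} {n T : ℕ}

def Silent (δ : S → S → S × S) (c : Fin n → S) : Prop :=
  ∀ p : SchedPair n, pstep δ c p = c

theorem configAt_length (δ : S → S → S × S) (c0 : Fin n → S) (σ : Fin T → SchedPair n) :
    configAt δ c0 σ T = (List.ofFn σ).foldl (pstep δ) c0 := by
  rw [configAt, List.take_of_length_le (by simp)]

theorem configAt_succ (δ : S → S → S × S) (c0 : Fin n → S) (σ : Fin T → SchedPair n) {t : ℕ}
    (ht : t < T) : configAt δ c0 σ (t + 1) = pstep δ (configAt δ c0 σ t) (σ ⟨t, ht⟩) := by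
  rw [configAt, configAt, List.take_add_one, List.foldl_append,
    List.getElem?_eq_getElem (by simpa using ht)]
  simp

def extendSched (σ : Fin T → SchedPair n) (ρ : ℕ → SchedPair n) : ℕ → SchedPair n :=
  fun t => if h : t < T then σ ⟨t, h⟩ else ρ (t - T)

theorem Fair.extendSched {ρ : ℕ → SchedPair n} (hρ : Fair ρ) (σ : Fin T → SchedPair n) :
    Fair (extendSched σ ρ) := by
  intro p t
  obtain ⟨t', ht', hp⟩ := hρ p t
  exact ⟨T + t', by omega, by simp [_root_.extendSched, hp]⟩

theorem exists_fair (n : ℕ) [Nonempty (SchedPair n)] : ∃ ρ : ℕ → SchedPair n, Fair ρ := by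
  let e := Fintype.equivFin (SchedPair n)
  have hN : 0 < Fintype.card (SchedPair n) := Fintype.card_pos
  refine ⟨fun t => e.symm ⟨t % Fintype.card (SchedPair n), Nat.mod_lt _ hN⟩, fun p t => ?_⟩
  refine ⟨Fintype.card (SchedPair n) * t + e p, by nlinarith, ?_⟩
  rw [Equiv.symm_apply_eq]
  ext
  exact (Nat.mul_add_mod_self_left _ _ _).trans (Nat.mod_eq_of_lt (e p).isLt)

theorem ptraj_extendSched_of_le (δ : S → S → S × S) (c0 : Fin n → S) (σ : Fin T → SchedPair n)
    (ρ : ℕ → SchedPair n) {t : ℕ} (ht : t ≤ T) :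
    ptraj δ c0 (extendSched σ ρ) t = configAt δ c0 σ t := by
  induction t with
  | zero => rfl
  | succ t ih => rw [ptraj, ih (by omega), extendSched, dif_pos (by omega), configAt_succ]

theorem ptraj_eq_of_silent {δ : S → S → S × S} {c0 : Fin n → S} {σ : ℕ → SchedPair n}
    {t₀ t : ℕ} (hs : Silent δ (ptraj δ c0 σ t₀)) (ht : t₀ ≤ t) :
    ptraj δ c0 σ t = ptraj δ c0 σ t₀ := by
  induction t, ht using Nat.le_induction with
  | base => rfl
  | succ t _ ih => rw [ptraj, ih, hs]

theorem ptraj_extendSched_of_silent {δ : S → S → S × S} {c0 : Fin n → S}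
    {σ : Fin T → SchedPair n} (ρ : ℕ → SchedPair n) (hs : Silent δ (configAt δ c0 σ T)) (t : ℕ) :
    ptraj δ c0 (extendSched σ ρ) t = configAt δ c0 σ (min t T) := by
  rcases le_total t T with ht | ht
  · rw [min_eq_left ht, ptraj_extendSched_of_le δ c0 σ ρ ht]
  · rw [← ptraj_extendSched_of_le δ c0 σ ρ le_rfl] at hs
    rw [min_eq_right ht, ptraj_eq_of_silent hs ht, ptraj_extendSched_of_le δ c0 σ ρ le_rfl]

theorem schedPair_nonempty (hn : 2 ≤ n) : Nonempty (SchedPair n) :=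
  ⟨⟨(⟨0, by omega⟩, ⟨1, by omega⟩), by simp⟩⟩

theorem card_schedPair_le (n : ℕ) : Fintype.card (SchedPair n) ≤ n ^ 2 := by
  calc Fintype.card (SchedPair n) ≤ Fintype.card (Fin n × Fin n) := Fintype.card_subtype_le _
    _ = n ^ 2 := by simp [sq]

theorem schedPr_mono {E F : (Fin T → SchedPair n) → Prop} (h : ∀ σ, E σ → F σ) :
    schedPr T E ≤ schedPr T F := by
  unfold schedPr
  gcongr
  exact h _

theorem schedPr_add_schedPr_not [Nonempty (SchedPair n)] (E : (Fin T → SchedPair n) → Prop) :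
    schedPr T E + schedPr T (fun σ => ¬ E σ) = 1 := by
  unfold schedPr
  rw [← add_div, ← Nat.cast_add, card_filter_add_card_filter_not, div_self]
  exact (Nat.cast_pos.mpr univ_nonempty.card_pos).ne'

end Schedules

theorem pow_mul_sum_foldl_ofFn_le {α β : Type*} [Fintype α] (f : β → α → β) (Φ : β → ℕ)
    {q r : ℕ} (hdrift : ∀ b, q * ∑ a, Φ (f b a) ≤ r * Φ b) (T : ℕ) (b : β) :
    q ^ T * ∑ σ : Fin T → α, Φ ((List.ofFn σ).foldl f b) ≤ r ^ T * Φ b := by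
  induction T generalizing b with
  | zero => simp
  | succ T ih =>
    have hsplit : ∑ σ : Fin (T + 1) → α, Φ ((List.ofFn σ).foldl f b) =
        ∑ a, ∑ τ : Fin T → α, Φ ((List.ofFn τ).foldl f (f b a)) := by
      rw [← (Fin.consEquiv fun _ => α).sum_comp, Fintype.sum_prod_type]
      simp [Fin.consEquiv, List.ofFn_succ]
    calc q ^ (T + 1) * ∑ σ : Fin (T + 1) → α, Φ ((List.ofFn σ).foldl f b)
        = q * ∑ a, q ^ T * ∑ τ : Fin T → α, Φ ((List.ofFn τ).foldl f (f b a)) := by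
          rw [hsplit, ← mul_sum, pow_succ', mul_assoc]
      _ ≤ q * ∑ a, r ^ T * Φ (f b a) := Nat.mul_le_mul_left _ (sum_le_sum fun a _ => ih (f b a))
      _ = r ^ T * (q * ∑ a, Φ (f b a)) := by rw [← mul_sum, mul_left_comm]
      _ ≤ r ^ T * (r * Φ b) := Nat.mul_le_mul_left _ (hdrift b)
      _ = r ^ (T + 1) * Φ b := by ring

theorem subSize_le_sub : ∀ k j, subSize k j ≤ k - j
  | 0, _ => by simp [subSize]
  | k + 1, 0 => by simp [subSize]
  | k + 1, j + 1 => by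
    have hl := subSize_le_sub ((k + 1) / 2) j
    have hr := subSize_le_sub ((k + 1) / 2) (j - (k + 1) / 2)
    have he := subSize_le_sub k j
    rw [subSize]
    split_ifs <;> omega
  termination_by k => k

theorem subSize_eq_zero {k j : ℕ} (h : k ≤ j) : subSize k j = 0 := by
  have := subSize_le_sub k j
  omega

theorem lt_of_two_le_subSize {n v : ℕ} (h : 2 ≤ subSize n v) : v < n := by
  by_contra hv
  rw [subSize_eq_zero (by omega)] at h
  omega

theorem subSize_zero_right {k : ℕ} (hk : 0 < k) : subSize k 0 = k := by
  obtain ⟨k, rfl⟩ : ∃ l, k = l + 1 := ⟨k - 1, by omega⟩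
  rw [subSize]

theorem subSize_odd_left {m i : ℕ} (hi : i < m) : subSize (2 * m + 1) (i + 1) = subSize m i := by
  rw [subSize, if_pos (by omega), if_pos (by omega), show (2 * m + 1) / 2 = m by omega]

theorem subSize_odd_right (m i : ℕ) : subSize (2 * m + 1) (m + i + 1) = subSize m i := by
  rw [subSize, if_pos (by omega), if_neg (by omega), show (2 * m + 1) / 2 = m by omega,
    Nat.add_sub_cancel_left]

theorem subSize_even_succ (m j : ℕ) : subSize (2 * m + 2) (j + 1) = subSize (2 * m + 1) j := by
  rw [subSize, if_neg (by omega)]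

theorem subSize_children (k j : ℕ) (hs : 2 ≤ subSize k j) :
    (subSize k j % 2 = 0 → subSize k (j + 1) = subSize k j - 1) ∧
    (subSize k j % 2 = 1 → subSize k (j + 1) = subSize k j / 2 ∧
      subSize k (j + subSize k j / 2 + 1) = subSize k j / 2) := by
  induction k using Nat.strong_induction_on generalizing j with
  | _ k ih =>
  have hk := subSize_le_sub k j
  obtain ⟨m, rfl | rfl⟩ : ∃ m, k = 2 * m + 1 ∨ k = 2 * m + 2 := ⟨(k - 1) / 2, by omega⟩
  · rcases j with _ | j
    · rw [subSize_zero_right (by omega), show (2 * m + 1) / 2 = m by omega] at *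
      refine ⟨by omega, fun _ => ?_⟩
      have hroot := subSize_odd_right m 0
      rw [Nat.add_zero] at hroot
      rw [subSize_odd_left (by omega), Nat.zero_add, hroot, subSize_zero_right (by omega)]
      exact ⟨rfl, rfl⟩
    rcases lt_or_ge j m with hj | hj
    · rw [subSize_odd_left hj] at *
      -- the subtree of `j` lies inside the left half, hence so do its children
      have hfit := subSize_le_sub m j
      obtain ⟨h0, h1⟩ := ih m (by omega) j hs
      refine ⟨fun he => ?_, fun ho => ?_⟩
      · rw [subSize_odd_left (by omega)]
        exact h0 he
      · rw [subSize_odd_left (by omega), show j + 1 + subSize m j / 2 + 1 =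
          j + subSize m j / 2 + 1 + 1 by omega, subSize_odd_left (by omega)]
        exact h1 ho
    · obtain ⟨i, rfl⟩ : ∃ i, j = m + i := ⟨j - m, by omega⟩
      rw [subSize_odd_right] at *
      obtain ⟨h0, h1⟩ := ih m (by omega) i hs
      rw [show m + i + 1 + 1 = m + (i + 1) + 1 by omega,
        show m + i + 1 + subSize m i / 2 + 1 = m + (i + subSize m i / 2 + 1) + 1 by omega,
        subSize_odd_right, subSize_odd_right]
      exact ⟨h0, h1⟩
  · rcases j with _ | j
    · rw [subSize_zero_right (by omega)] at *
      refine ⟨fun _ => ?_, by omega⟩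
      rw [subSize_even_succ, subSize_zero_right (by omega)]
      rfl
    · rw [subSize_even_succ] at *
      obtain ⟨h0, h1⟩ := ih (2 * m + 1) (by omega) j hs
      rw [subSize_even_succ, show j + 1 + subSize (2 * m + 1) j / 2 + 1 =
        j + subSize (2 * m + 1) j / 2 + 1 + 1 by omega, subSize_even_succ]
      exact ⟨h0, h1⟩

def nodeWeight (s : ℕ) : ℕ :=
  if s ≤ 1 then 0 else 9 ^ Nat.log 2 s * (if s % 2 = 0 then 3 else 1)

theorem one_le_nodeWeight {s : ℕ} (hs : 2 ≤ s) : 1 ≤ nodeWeight s := by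
  rw [nodeWeight, if_neg (by omega)]
  have := Nat.one_le_pow (Nat.log 2 s) 9 (by norm_num)
  split_ifs <;> omega

theorem three_mul_nodeWeight_sub_one_le {s : ℕ} (he : s % 2 = 0) :
    3 * nodeWeight (s - 1) ≤ nodeWeight s := by
  have := Nat.pow_le_pow_right (show 0 < 9 by norm_num)
    (Nat.log_mono_right (b := 2) (Nat.sub_le s 1))
  unfold nodeWeight
  split_ifs <;> omega

theorem three_mul_nodeWeight_div_two_le {s : ℕ} (ho : s % 2 = 1) :
    3 * nodeWeight (s / 2) ≤ nodeWeight s := by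
  rcases (show s = 1 ∨ 2 ≤ s by omega) with rfl | hs
  · simp [nodeWeight]
  have hlog : Nat.log 2 s = Nat.log 2 (s / 2) + 1 := by
    have := Nat.log_pos (b := 2) (by norm_num) hs
    rw [Nat.log_div_base]
    omega
  unfold nodeWeight
  rw [hlog, pow_succ]
  split_ifs <;> omega

theorem nodeWeight_le (s : ℕ) : nodeWeight s ≤ 3 * s ^ 4 := by
  by_cases hs : s ≤ 1
  · simp [nodeWeight, hs]
  calc nodeWeight s ≤ 16 ^ Nat.log 2 s * 3 := by
        rw [nodeWeight, if_neg hs]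
        gcongr
        · norm_num
        · split_ifs <;> omega
    _ = 3 * (2 ^ Nat.log 2 s) ^ 4 := by rw [← pow_mul, mul_comm _ 4, pow_mul]; ring
    _ ≤ 3 * s ^ 4 := by
        gcongr
        exact Nat.pow_log_le_self 2 (by omega)

section Potential

variable {n : ℕ}

def occupancy (c : Fin n → ℕ) (v : ℕ) : ℕ := #{a | c a = v}

def potential (n : ℕ) (c : Fin n → ℕ) : ℕ :=
  ∑ v ∈ range n, nodeWeight (subSize n v) * (occupancy c v - 1)

theorem occupancy_update (c : Fin n → ℕ) (a : Fin n) (u v : ℕ) :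
    occupancy (Function.update c a u) v + (if c a = v then 1 else 0) =
      occupancy c v + (if u = v then 1 else 0) := by
  simp only [occupancy, card_filter]
  rw [← add_sum_erase _ _ (mem_univ a), ← add_sum_erase _ _ (mem_univ a),
    sum_congr rfl fun b hb => by rw [Function.update_of_ne (ne_of_mem_erase hb)],
    Function.update_self]
  omega

theorem sum_range_nodeWeight_ite (n u : ℕ) :
    ∑ v ∈ range n, (if u = v then nodeWeight (subSize n v) else 0) = nodeWeight (subSize n u) := by
  rw [sum_ite_eq]
  split_ifs with hu
  · rfl
  · rw [subSize_eq_zero (by simpa using hu)]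
    rfl

theorem potential_update_add_le (c : Fin n → ℕ) (a : Fin n) (u : ℕ) :
    potential n (Function.update c a u) +
        (if 2 ≤ occupancy c (c a) then nodeWeight (subSize n (c a)) else 0) ≤
      potential n c + nodeWeight (subSize n u) := by
  rw [← sum_range_nodeWeight_ite n u, potential, potential, ← sum_add_distrib]
  split_ifs with h2
  · rw [← sum_range_nodeWeight_ite n (c a), ← sum_add_distrib]
    refine sum_le_sum fun v _ => ?_
    have key : occupancy (Function.update c a u) v - 1 + (if c a = v then 1 else 0) ≤
        occupancy c v - 1 + (if u = v then 1 else 0) := by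
      have := occupancy_update c a u v
      split_ifs at * with hv <;> subst_vars <;> omega
    simpa only [mul_add, mul_ite, mul_one, mul_zero] using Nat.mul_le_mul_left _ key
  · rw [add_zero]
    refine sum_le_sum fun v _ => ?_
    have key : occupancy (Function.update c a u) v - 1 ≤
        occupancy c v - 1 + (if u = v then 1 else 0) := by
      have := occupancy_update c a u v
      split_ifs at * <;> omega
    simpa only [mul_add, mul_ite, mul_one, mul_zero] using Nat.mul_le_mul_left _ key

theorem potential_le (n : ℕ) (c : Fin n → ℕ) : potential n c ≤ 3 * n ^ 5 := by
  calc potential n c ≤ ∑ v ∈ range n, 3 * n ^ 4 * occupancy c v := by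
        refine sum_le_sum fun v _ => Nat.mul_le_mul ?_ (Nat.sub_le _ _)
        calc nodeWeight (subSize n v) ≤ 3 * subSize n v ^ 4 := nodeWeight_le _
          _ ≤ 3 * n ^ 4 := by gcongr; exact (subSize_le_sub n v).trans (Nat.sub_le n v)
    _ = 3 * n ^ 4 * #{a | c a ∈ range n} := by
        simp only [← mul_sum, occupancy, sum_card_fiberwise_eq_card_filter]
    _ ≤ 3 * n ^ 4 * n := by gcongr; exact (card_filter_le _ _).trans (by simp)
    _ = 3 * n ^ 5 := by ring

def Productive (c : Fin n → ℕ) (p : SchedPair n) : Prop :=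
  c p.1.1 = c p.1.2 ∧ 2 ≤ subSize n (c p.1.1)

theorem pstep_of_not_productive {c : Fin n → ℕ} {p : SchedPair n}
    (h : ¬ Productive c p) : pstep (treeDelta n) c p = c := by
  have hδ : treeDelta n (c p.1.1) (c p.1.2) = (c p.1.1, c p.1.2) := by
    unfold treeDelta Productive at *
    split_ifs <;> simp_all <;> omega
  funext a
  simp only [pstep, hδ]
  split_ifs <;> simp_all

theorem pstep_of_productive_even {c : Fin n → ℕ} {p : SchedPair n}
    (h : Productive c p) (he : subSize n (c p.1.1) % 2 = 0) :
    pstep (treeDelta n) c p = Function.update c p.1.2 (c p.1.1 + 1) := by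
  have hδ : treeDelta n (c p.1.1) (c p.1.2) = (c p.1.1, c p.1.1 + 1) := by
    have := h.2
    rw [treeDelta, if_pos h.1, if_pos ⟨he, by omega⟩]
  funext a
  simp only [pstep, hδ, Function.update_apply]
  have := p.2
  split_ifs <;> simp_all

theorem pstep_of_productive_odd {c : Fin n → ℕ} {p : SchedPair n}
    (h : Productive c p) (ho : subSize n (c p.1.1) % 2 = 1) :
    pstep (treeDelta n) c p = Function.update (Function.update c p.1.1 (c p.1.1 + 1)) p.1.2
      (c p.1.1 + subSize n (c p.1.1) / 2 + 1) := by
  have hδ : treeDelta n (c p.1.1) (c p.1.2) =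
      (c p.1.1 + 1, c p.1.1 + subSize n (c p.1.1) / 2 + 1) := by
    have := h.2
    rw [treeDelta, if_pos h.1, if_neg (by omega), if_pos (by omega)]
  funext a
  simp only [pstep, hδ, Function.update_apply]
  have := p.2
  split_ifs <;> simp_all

theorem two_le_occupancy_of_productive {c : Fin n → ℕ} {p : SchedPair n}
    (h : Productive c p) : 2 ≤ occupancy c (c p.1.1) := by
  refine one_lt_card.mpr ⟨p.1.1, ?_, p.1.2, ?_, p.2⟩ <;> simp [h.1]

theorem potential_pstep_of_productive {c : Fin n → ℕ} {p : SchedPair n}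
    (h : Productive c p) :
    3 * potential n (pstep (treeDelta n) c p) + nodeWeight (subSize n (c p.1.1)) ≤
      3 * potential n c := by
  have hocc := two_le_occupancy_of_productive h
  obtain ⟨hsucc, hhalf⟩ := subSize_children n (c p.1.1) h.2
  rcases Nat.mod_two_eq_zero_or_one (subSize n (c p.1.1)) with he | ho
  · have hmove := potential_update_add_le c p.1.2 (c p.1.1 + 1)
    rw [← h.1, if_pos hocc, hsucc he] at hmove
    have := three_mul_nodeWeight_sub_one_le he
    rw [pstep_of_productive_even h he]
    omega
  · obtain ⟨hleft, hright⟩ := hhalf ho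
    have hmove₁ := potential_update_add_le c p.1.1 (c p.1.1 + 1)
    rw [if_pos hocc, hleft] at hmove₁
    have hmove₂ := potential_update_add_le (Function.update c p.1.1 (c p.1.1 + 1)) p.1.2
      (c p.1.1 + subSize n (c p.1.1) / 2 + 1)
    rw [hright] at hmove₂
    have := three_mul_nodeWeight_div_two_le ho
    rw [pstep_of_productive_odd h ho]
    omega

theorem occupancy_sub_one_le_card_productive {v : ℕ} (c : Fin n → ℕ) (hv : 2 ≤ subSize n v) :
    occupancy c v - 1 ≤ #{p : SchedPair n | Productive c p ∧ c p.1.1 = v} := by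
  rcases Nat.eq_zero_or_pos (occupancy c v) with h0 | hpos
  · omega
  obtain ⟨a₀, ha₀⟩ := card_pos.mp hpos
  have hca₀ : c a₀ = v := (mem_filter.mp ha₀).2
  rw [occupancy, ← card_erase_of_mem ha₀]
  refine card_le_card_of_surjOn (fun p => p.1.2) fun b hb => ?_
  obtain ⟨hba₀, hb⟩ := mem_erase.mp hb
  have hcb : c b = v := (mem_filter.mp hb).2
  exact ⟨⟨(a₀, b), Ne.symm hba₀⟩,
    mem_filter.mpr ⟨mem_univ _, ⟨hca₀.trans hcb.symm, hca₀ ▸ hv⟩, hca₀⟩, rfl⟩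

theorem potential_le_sum_productive (c : Fin n → ℕ) :
    potential n c ≤ ∑ p : SchedPair n with Productive c p, nodeWeight (subSize n (c p.1.1)) := by
  rw [← sum_fiberwise_of_maps_to (g := fun p => c p.1.1) (t := range n)
    fun p hp => mem_range.mpr (lt_of_two_le_subSize (mem_filter.mp hp).2.2)]
  refine sum_le_sum fun v _ => ?_
  rw [sum_congr rfl fun p hp => by rw [(mem_filter.mp hp).2], sum_const, smul_eq_mul,
    filter_filter, mul_comm]
  by_cases hv : 2 ≤ subSize n v
  · exact Nat.mul_le_mul_right _ (occupancy_sub_one_le_card_productive c hv)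
  · simp [nodeWeight, show subSize n v ≤ 1 by omega]

theorem sum_potential_pstep_le (c : Fin n → ℕ) :
    3 * ∑ p : SchedPair n, potential n (pstep (treeDelta n) c p) ≤
      (3 * Fintype.card (SchedPair n) - 1) * potential n c := by
  have hdrift (p : SchedPair n) : 3 * potential n (pstep (treeDelta n) c p) +
      (if Productive c p then nodeWeight (subSize n (c p.1.1)) else 0) ≤ 3 * potential n c := by
    split_ifs with h
    · exact potential_pstep_of_productive h
    · rw [pstep_of_not_productive h, add_zero]
  have hsum := sum_le_sum fun p (_ : p ∈ univ) => hdrift p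
  rw [sum_add_distrib, ← sum_filter, ← mul_sum, sum_const, card_univ, smul_eq_mul] at hsum
  have := potential_le_sum_productive c
  rw [mul_left_comm] at hsum
  rw [Nat.sub_mul, one_mul, mul_assoc]
  omega

theorem silent_of_potential_eq_zero {c : Fin n → ℕ} (h : potential n c = 0) :
    Silent (treeDelta n) c := by
  intro p
  by_contra hp
  have hprod : Productive c p := by_contra fun hnp => hp (pstep_of_not_productive hnp)
  have hterm := (sum_eq_zero_iff.mp h) (c p.1.1) (mem_range.mpr (lt_of_two_le_subSize hprod.2))
  have := one_le_nodeWeight hprod.2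
  have := two_le_occupancy_of_productive hprod
  rcases Nat.mul_eq_zero.mp hterm with h0 | h0 <;> omega

end Potential

theorem card_potential_ne_zero_mul_pow_le {n : ℕ} (T : ℕ) (c0 : Fin n → ℕ) :
    #{σ : Fin T → SchedPair n | potential n (configAt (treeDelta n) c0 σ T) ≠ 0} * 3 ^ T ≤
      (3 * Fintype.card (SchedPair n) - 1) ^ T * potential n c0 := by
  calc #{σ : Fin T → SchedPair n | potential n (configAt (treeDelta n) c0 σ T) ≠ 0} * 3 ^ T
      ≤ (∑ σ, potential n (configAt (treeDelta n) c0 σ T)) * 3 ^ T := by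
        gcongr
        rw [card_eq_sum_ones]
        exact (sum_le_sum fun σ hσ => Nat.one_le_iff_ne_zero.mpr (mem_filter.mp hσ).2).trans
          (sum_le_sum_of_subset (subset_univ _))
    _ ≤ (3 * Fintype.card (SchedPair n) - 1) ^ T * potential n c0 := by
        rw [mul_comm]
        simp only [configAt_length]
        exact pow_mul_sum_foldl_ofFn_le _ _ sum_potential_pstep_le T c0

theorem schedPr_potential_ne_zero_le {n : ℕ} [Nonempty (SchedPair n)] (T : ℕ) (c0 : Fin n → ℕ) :
    schedPr T (fun σ => potential n (configAt (treeDelta n) c0 σ T) ≠ 0) ≤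
      potential n c0 * Real.exp (-(T / (3 * Fintype.card (SchedPair n)))) := by
  have hcount := card_potential_ne_zero_mul_pow_le T c0
  set N := Fintype.card (SchedPair n)
  have hN₁ : 1 ≤ N := Fintype.card_pos
  have hN : (1 : ℝ) ≤ N := by exact_mod_cast hN₁
  rw [← Nat.cast_le (α := ℝ)] at hcount
  push_cast [Nat.cast_sub (show 1 ≤ 3 * N by omega)] at hcount
  have hbase : (3 * N - 1) / (3 * N) = 1 - 1 / (3 * N : ℝ) := by field_simp
  calc schedPr T (fun σ => potential n (configAt (treeDelta n) c0 σ T) ≠ 0)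
      = #{σ : Fin T → SchedPair n | potential n (configAt (treeDelta n) c0 σ T) ≠ 0} /
          (N : ℝ) ^ T := by simp [schedPr, N]
    _ ≤ potential n c0 * (1 - 1 / (3 * N : ℝ)) ^ T := by
        rw [← hbase, div_le_iff₀ (by positivity), div_pow, mul_pow]
        field_simp
        linarith
    _ ≤ potential n c0 * Real.exp (-(1 / (3 * N))) ^ T := by
        gcongr
        · rw [sub_nonneg, div_le_one (by positivity)]
          linarith
        · exact Real.one_sub_le_exp_neg _
    _ = potential n c0 * Real.exp (-(T / (3 * N))) := by
        rw [← Real.exp_nat_mul]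
        ring_nf

theorem three_mul_pow_five_mul_exp_neg_le {n : ℕ} (hn : 2 ≤ n) {x : ℝ} (hx : 8 * Real.log n ≤ x) :
    3 * (n : ℝ) ^ 5 * Real.exp (-x) ≤ (n : ℝ) ^ (-1 : ℝ) := by
  have hn' : (2 : ℝ) ≤ n := by exact_mod_cast hn
  calc 3 * (n : ℝ) ^ 5 * Real.exp (-x) ≤ 3 * n ^ 5 * Real.exp (-((8 : ℕ) * Real.log n)) := by
        gcongr
        exact_mod_cast hx
    _ = 3 / n ^ 2 * (n : ℝ)⁻¹ := by
        rw [Real.exp_neg, Real.exp_nat_mul, Real.exp_log (by positivity)]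
        field_simp
    _ ≤ 1 * (n : ℝ)⁻¹ := by
        gcongr
        rw [div_le_one (by positivity)]
        nlinarith
    _ = (n : ℝ) ^ (-1 : ℝ) := by rw [one_mul, Real.rpow_neg_one]

theorem schedPr_ge_of_silent {n : ℕ} (hn : 2 ≤ n) (c0 : Fin n → ℕ) {T : ℕ}
    (hT : 24 * (n : ℝ) * Real.log n * n ≤ T) {E : (Fin T → SchedPair n) → Prop}
    (hE : ∀ σ, Silent (treeDelta n) (configAt (treeDelta n) c0 σ T) → E σ) :
    1 - (n : ℝ) ^ (-1 : ℝ) ≤ schedPr T E := by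
  have := schedPair_nonempty hn
  set N := Fintype.card (SchedPair n)
  have hN : (0 : ℝ) < N := by exact_mod_cast Fintype.card_pos
  have hNn : (N : ℝ) ≤ n ^ 2 := by exact_mod_cast card_schedPair_le n
  have hlog : 0 ≤ Real.log n := Real.log_nonneg (by exact_mod_cast (by omega : 1 ≤ n))
  have hrate : 8 * Real.log n ≤ T / (3 * N) := by
    rw [le_div_iff₀ (by positivity)]
    nlinarith
  have hφ : (potential n c0 : ℝ) ≤ 3 * n ^ 5 := by exact_mod_cast potential_le n c0
  have hfail := schedPr_potential_ne_zero_le T c0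
  have hsmall := three_mul_pow_five_mul_exp_neg_le hn hrate
  have hφexp : (potential n c0 : ℝ) * Real.exp (-(T / (3 * N))) ≤
      3 * n ^ 5 * Real.exp (-(T / (3 * N))) := by gcongr
  have hsum := schedPr_add_schedPr_not (T := T)
    fun σ => potential n (configAt (treeDelta n) c0 σ T) = 0
  have hmono := schedPr_mono fun σ h => hE σ (silent_of_potential_eq_zero h)
  linarith

theorem BalancedPath.configAt_of_silent {n T : ℕ} {c0 : Fin n → ℕ} {P : List ℕ}
    [Nonempty (SchedPair n)] (hB : BalancedPath n c0 P) {σ : Fin T → SchedPair n}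
    (hs : Silent (treeDelta n) (configAt (treeDelta n) c0 σ T)) :
    ∀ p ∈ P, ∃! a, configAt (treeDelta n) c0 σ T a = p := by
  obtain ⟨ρ, hρ⟩ := exists_fair n
  obtain ⟨T₀, hT₀⟩ := hB _ (hρ.extendSched σ)
  have := hT₀ (max T₀ T) (le_max_left _ _)
  rwa [ptraj_extendSched_of_silent ρ hs, min_eq_right (le_max_right _ _)] at this

theorem OverloadedPath.exists_configAt_of_silent {n T : ℕ} {c0 : Fin n → ℕ} {lf : ℕ}
    [Nonempty (SchedPair n)] (hO : OverloadedPath n c0 lf) {σ : Fin T → SchedPair n}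
    (hs : Silent (treeDelta n) (configAt (treeDelta n) c0 σ T)) :
    ∃ t ≤ T, ∃ a b : Fin n, a ≠ b ∧
      configAt (treeDelta n) c0 σ t a = lf ∧ configAt (treeDelta n) c0 σ t b = lf := by
  obtain ⟨ρ, hρ⟩ := exists_fair n
  obtain ⟨t, a, b, hab, ha, hb⟩ := hO _ (hρ.extendSched σ)
  rw [ptraj_extendSched_of_silent ρ hs] at ha hb
  exact ⟨min t T, min_le_right _ _, a, b, hab, ha, hb⟩

/-- Consider an arbitrary root-to-leaf path of the tree of ranks under
the ranking protocol based on rule `R₁` with the uniform random scheduler on `n`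
agents. If the path is balanced, then whp within parallel time `O(n·log n)` each
node of the path is occupied by exactly one agent; if the path is overloaded, then
whp within parallel time `O(n·log n)` the leaf of the path becomes overloaded. -/
theorem tree_path_progress_whp :
    ∃ c η : ℝ, 0 < c ∧ 0 < η ∧
      ∀ n : ℕ, 2 ≤ n → ∀ (P : List ℕ) (lf : ℕ), RootToLeaf n P lf →
        ∀ c0 : Fin n → ℕ, (∀ i, c0 i < n) →
          ∀ T : ℕ, T = Nat.ceil (c * (n : ℝ) * Real.log n * (n : ℝ)) →
            (BalancedPath n c0 P →
              schedPr T (fun σ : Fin T → SchedPair n =>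
                  ∃ t ≤ T, ∀ p ∈ P, ∃! a, configAt (treeDelta n) c0 σ t a = p) ≥
                1 - (n : ℝ) ^ (-η)) ∧
            (OverloadedPath n c0 lf →
              schedPr T (fun σ : Fin T → SchedPair n =>
                  ∃ t ≤ T, ∃ a b : Fin n, a ≠ b ∧
                    configAt (treeDelta n) c0 σ t a = lf ∧
                    configAt (treeDelta n) c0 σ t b = lf) ≥
                1 - (n : ℝ) ^ (-η)) := by
  refine ⟨24, 1, by norm_num, by norm_num, fun n hn P lf _ c0 _ T hT => ?_⟩
  have : Nonempty (SchedPair n) := schedPair_nonempty hn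
  have hT' : 24 * (n : ℝ) * Real.log n * n ≤ T := hT ▸ Nat.le_ceil _
  exact ⟨fun hB => schedPr_ge_of_silent hn c0 hT' fun _ hs => ⟨T, le_rfl, hB.configAt_of_silent hs⟩,
    fun hO => schedPr_ge_of_silent hn c0 hT' fun _ hs => hO.exists_configAt_of_silent hs⟩
end
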